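/- arXiv:1110.2227 — 3 statements merged into one kernel-verified Lean document; each statement's English description precedes it below -/
import Mathlib

section
/- Let W be a symmetric N×N real matrix with nonnegative entries, zero diagonal, and connected associated graph; let S be diagonal with positive diagonal entries, D the degree matrix, L = S^{-1}(D − W), and p a positive integer. Let Ω_1, …, Ω_m be pairwise disjoint nonempty subsets of {1,…,N} and β_1, …, β_m real numbers. Then the constrained minimization problem: minimize E(π) = π^T S L^p π over all π ∈ ℝ^N with Ave{π|Ω_r} = β_r for r = 1,…,m, has a solution, and the solution is unique. -/
open Matrix Finset

noncomputable def Gm {N : ℕ} (W : Matrix (Fin N) (Fin N) ℝ) : Matrix (Fin N) (Fin N) ℝ :=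
  Matrix.diagonal (fun i => ∑ j, W i j) - W

noncomputable def Lm {N : ℕ} (W : Matrix (Fin N) (Fin N) ℝ) (S : Fin N → ℝ) :
    Matrix (Fin N) (Fin N) ℝ :=
  (Matrix.diagonal S)⁻¹ * Gm W

section Aux
variable {N : ℕ} (W : Matrix (Fin N) (Fin N) ℝ) (S : Fin N → ℝ)

lemma mulVecG_eq (x : Fin N → ℝ) (i : Fin N) :
    (Gm W *ᵥ x) i = ∑ j, W i j * (x i - x j) := by
  rw [Gm, Matrix.sub_mulVec]
  show (Matrix.diagonal (fun i => ∑ j, W i j) *ᵥ x) i - (W *ᵥ x) i = _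
  rw [Matrix.mulVec_diagonal]
  simp only [mulVec, dotProduct, mul_sub, Finset.sum_sub_distrib, Finset.sum_mul]

lemma quadG_eq (hWsym : W.IsSymm) (x : Fin N → ℝ) :
    x ⬝ᵥ (Gm W *ᵥ x) = (∑ i, ∑ j, W i j * (x i - x j) ^ 2) / 2 := by
  have hsym : ∀ i j, W j i = W i j := fun i j => (hWsym.apply j i).symm
  have h1 : x ⬝ᵥ (Gm W *ᵥ x) = ∑ i, ∑ j, W i j * ((x i - x j) * x i) := by
    simp only [dotProduct, mulVecG_eq, Finset.mul_sum]
    exact Finset.sum_congr rfl fun i _ => Finset.sum_congr rfl fun j _ => by ring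
  have h2 : ∑ i, ∑ j, W i j * ((x i - x j) * x j)
      = -∑ i, ∑ j, W i j * ((x i - x j) * x i) := by
    rw [Finset.sum_comm, ← Finset.sum_neg_distrib]
    refine Finset.sum_congr rfl fun i _ => ?_
    rw [← Finset.sum_neg_distrib]
    refine Finset.sum_congr rfl fun j _ => ?_
    rw [hsym]; ring
  have h3 : ∑ i, ∑ j, W i j * (x i - x j) ^ 2
      = ∑ i, ∑ j, (W i j * ((x i - x j) * x i) - W i j * ((x i - x j) * x j)) := by
    refine Finset.sum_congr rfl fun i _ => Finset.sum_congr rfl fun j _ => by ring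
  rw [h1, h3]
  simp only [Finset.sum_sub_distrib, h2]
  ring

lemma quadG_nonneg (hWnn : ∀ i j, 0 ≤ W i j) (x : Fin N → ℝ) :
    0 ≤ ∑ i, ∑ j, W i j * (x i - x j) ^ 2 :=
  Finset.sum_nonneg fun i _ => Finset.sum_nonneg fun j _ =>
    mul_nonneg (hWnn i j) (sq_nonneg _)

lemma quadG_zero_const (hWnn : ∀ i j, 0 ≤ W i j)
    (hconn : ∀ i j : Fin N, Relation.ReflTransGen (fun a b => 0 < W a b) i j)
    (x : Fin N → ℝ) (h : ∑ i, ∑ j, W i j * (x i - x j) ^ 2 = 0) :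
    ∀ i j, x i = x j := by
  have hterm : ∀ i j, W i j * (x i - x j) ^ 2 = 0 := by
    intro i j
    have h1 := (Finset.sum_eq_zero_iff_of_nonneg
      (fun i _ => Finset.sum_nonneg fun j _ => mul_nonneg (hWnn i j) (sq_nonneg _))).mp h
      i (Finset.mem_univ i)
    exact (Finset.sum_eq_zero_iff_of_nonneg
      (fun j _ => mul_nonneg (hWnn i j) (sq_nonneg _))).mp h1 j (Finset.mem_univ j)
  have hedge : ∀ i j, 0 < W i j → x i = x j := by
    intro i j hw
    have h2 : (x i - x j) ^ 2 = 0 := by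
      rcases mul_eq_zero.mp (hterm i j) with h | h
      · exact absurd h (ne_of_gt hw)
      · exact h
    have := pow_eq_zero_iff (n := 2) (by norm_num) |>.mp h2
    linarith
  intro i j
  induction hconn i j with
  | refl => rfl
  | tail _ hbc ih => exact ih.trans (hedge _ _ hbc)

lemma row_sum_G (hWsym : W.IsSymm) (y : Fin N → ℝ) :
    ∑ i, (Gm W *ᵥ y) i = 0 := by
  have hsym : ∀ i j, W j i = W i j := fun i j => (hWsym.apply j i).symm
  simp only [mulVecG_eq, mul_sub, Finset.sum_sub_distrib]
  rw [sub_eq_zero]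
  rw [Finset.sum_comm]
  exact Finset.sum_congr rfl fun i _ => Finset.sum_congr rfl fun j _ => by rw [hsym]

lemma sigma_mul_inv (hS : ∀ i, 0 < S i) :
    (Matrix.diagonal S) * (Matrix.diagonal S)⁻¹ = 1 := by
  apply Matrix.mul_nonsing_inv
  rw [Matrix.det_diagonal]
  exact isUnit_iff_ne_zero.mpr (Finset.prod_ne_zero_iff.mpr fun i _ => ne_of_gt (hS i))

lemma SL_eq_G (hS : ∀ i, 0 < S i) : Matrix.diagonal S * Lm W S = Gm W := by
  rw [Lm, ← mul_assoc, sigma_mul_inv S hS, one_mul]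

lemma G_symm (hWsym : W.IsSymm) : (Gm W)ᵀ = Gm W := by
  rw [Gm, Matrix.transpose_sub, Matrix.diagonal_transpose, hWsym]

lemma symm_SLk (hWsym : W.IsSymm) (hS : ∀ i, 0 < S i) (k : ℕ) :
    (Matrix.diagonal S * (Lm W S) ^ k)ᵀ = Matrix.diagonal S * (Lm W S) ^ k := by
  set G := Gm W
  set L := Lm W S
  have hGsym : Gᵀ = G := G_symm W hWsym
  have hSL : Matrix.diagonal S * L = G := SL_eq_G W S hS
  induction k with
  | zero => simp [Matrix.diagonal_transpose]
  | succ k ih =>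
    have h1 : Matrix.diagonal S * L ^ (k + 1) = Matrix.diagonal S * L ^ k * L := by
      rw [pow_succ, mul_assoc]
    rw [h1, Matrix.transpose_mul, ih]
    calc Lᵀ * (Matrix.diagonal S * L ^ k)
        = (Lᵀ * Matrix.diagonal S) * L ^ k := by rw [mul_assoc]
      _ = G * L ^ k := by
          rw [show Lᵀ * Matrix.diagonal S = G from ?_]
          rw [← Matrix.diagonal_transpose S, ← Matrix.transpose_mul, hSL, hGsym]
      _ = (Matrix.diagonal S * L) * L ^ k := by rw [hSL]
      _ = Matrix.diagonal S * L ^ (k + 1) := by rw [mul_assoc, ← pow_succ']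
      _ = Matrix.diagonal S * L ^ k * L := h1.symm ▸ rfl

lemma split_even (hWsym : W.IsSymm) (hS : ∀ i, 0 < S i) (k : ℕ) :
    Matrix.diagonal S * (Lm W S) ^ (k + k)
      = ((Lm W S) ^ k)ᵀ * (Matrix.diagonal S * (Lm W S) ^ k) := by
  set L := Lm W S
  have h : (L ^ k)ᵀ * Matrix.diagonal S = Matrix.diagonal S * L ^ k := by
    rw [← Matrix.diagonal_transpose S, ← Matrix.transpose_mul, Matrix.diagonal_transpose,
      symm_SLk W S hWsym hS]
  calc Matrix.diagonal S * L ^ (k + k)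
      = (Matrix.diagonal S * L ^ k) * L ^ k := by rw [pow_add, mul_assoc]
    _ = ((L ^ k)ᵀ * Matrix.diagonal S) * L ^ k := by rw [h]
    _ = (L ^ k)ᵀ * (Matrix.diagonal S * L ^ k) := by rw [mul_assoc]

lemma split_odd (hWsym : W.IsSymm) (hS : ∀ i, 0 < S i) (k : ℕ) :
    Matrix.diagonal S * (Lm W S) ^ (2 * k + 1)
      = ((Lm W S) ^ k)ᵀ * (Gm W * (Lm W S) ^ k) := by
  set L := Lm W S
  have h : (L ^ k)ᵀ * Matrix.diagonal S = Matrix.diagonal S * L ^ k := by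
    rw [← Matrix.diagonal_transpose S, ← Matrix.transpose_mul, Matrix.diagonal_transpose,
      symm_SLk W S hWsym hS]
  have h2 : 2 * k + 1 = k + (1 + k) := by ring
  calc Matrix.diagonal S * L ^ (2 * k + 1)
      = (Matrix.diagonal S * L ^ k) * (L * L ^ k) := by
        rw [h2, pow_add, pow_add, pow_one, mul_assoc]
    _ = ((L ^ k)ᵀ * Matrix.diagonal S) * (L * L ^ k) := by rw [h]
    _ = (L ^ k)ᵀ * ((Matrix.diagonal S * L) * L ^ k) := by
        rw [mul_assoc, ← mul_assoc (Matrix.diagonal S)]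
    _ = (L ^ k)ᵀ * (Gm W * L ^ k) := by rw [SL_eq_G W S hS]

lemma conj_quad (M A : Matrix (Fin N) (Fin N) ℝ) (x : Fin N → ℝ) :
    x ⬝ᵥ ((Mᵀ * (A * M)) *ᵥ x) = (M *ᵥ x) ⬝ᵥ (A *ᵥ (M *ᵥ x)) := by
  rw [← Matrix.mulVec_mulVec, Matrix.dotProduct_mulVec, Matrix.vecMul_transpose,
    ← Matrix.mulVec_mulVec]

lemma diag_quad (y : Fin N → ℝ) :
    y ⬝ᵥ (Matrix.diagonal S *ᵥ y) = ∑ i, S i * y i ^ 2 := by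
  simp only [dotProduct, Matrix.mulVec_diagonal]
  exact Finset.sum_congr rfl fun i _ => by ring

lemma descend (hWsym : W.IsSymm) (hWnn : ∀ i j, 0 ≤ W i j)
    (hconn : ∀ i j : Fin N, Relation.ReflTransGen (fun a b => 0 < W a b) i j)
    (hS : ∀ i, 0 < S i) (hN : 0 < N) :
    ∀ (k : ℕ) (x : Fin N → ℝ) (c : ℝ), (∀ i, ((Lm W S) ^ k *ᵥ x) i = c) →
      ∀ i j, x i = x j := by
  intro k
  induction k with
  | zero =>
    intro x c h i j
    simp only [pow_zero, Matrix.one_mulVec] at h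
    rw [h i, h j]
  | succ k ih =>
    intro x c h
    obtain ⟨y, hy⟩ : ∃ y, (Lm W S) ^ k *ᵥ x = y := ⟨_, rfl⟩
    have hLy : ∀ i, ((Lm W S) *ᵥ y) i = c := by
      intro i
      rw [← hy, Matrix.mulVec_mulVec, ← pow_succ']
      exact h i
    have hGy : ∀ i, (Gm W *ᵥ y) i = S i * c := by
      intro i
      have hgy : Gm W *ᵥ y = Matrix.diagonal S *ᵥ ((Lm W S) *ᵥ y) := by
        rw [Matrix.mulVec_mulVec, SL_eq_G W S hS]
      rw [hgy, Matrix.mulVec_diagonal, hLy i]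
    have hc : c = 0 := by
      have h0 : ∑ i, (Gm W *ᵥ y) i = 0 := row_sum_G W hWsym y
      rw [Finset.sum_congr rfl (fun i _ => hGy i), ← Finset.sum_mul] at h0
      have hSpos : 0 < ∑ i, S i :=
        Finset.sum_pos (fun i _ => hS i) (Finset.univ_nonempty_iff.mpr ⟨⟨0, hN⟩⟩)
      rcases mul_eq_zero.mp h0 with h | h
      · exact absurd h (ne_of_gt hSpos)
      · exact h
    have hGy0 : ∀ i, (Gm W *ᵥ y) i = 0 := fun i => by rw [hGy i, hc, mul_zero]
    have hq : ∑ i, ∑ j, W i j * (y i - y j) ^ 2 = 0 := by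
      have hq1 : y ⬝ᵥ (Gm W *ᵥ y) = 0 := by
        simp only [dotProduct]
        exact Finset.sum_eq_zero fun i _ => by rw [hGy0 i, mul_zero]
      rw [quadG_eq W hWsym y] at hq1
      linarith
    have hyconst := quadG_zero_const W hWnn hconn y hq
    exact ih x (y ⟨0, hN⟩) (fun i => by rw [hy]; exact hyconst i ⟨0, hN⟩)

lemma Q_nonneg (hWsym : W.IsSymm) (hWnn : ∀ i j, 0 ≤ W i j) (hS : ∀ i, 0 < S i)
    (p : ℕ) (x : Fin N → ℝ) :
    0 ≤ x ⬝ᵥ ((Matrix.diagonal S * (Lm W S) ^ p) *ᵥ x) := by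
  rcases Nat.even_or_odd p with ⟨k, hk⟩ | ⟨k, hk⟩
  · subst hk
    rw [split_even W S hWsym hS, conj_quad, diag_quad]
    exact Finset.sum_nonneg fun i _ => mul_nonneg (le_of_lt (hS i)) (sq_nonneg _)
  · subst hk
    rw [split_odd W S hWsym hS, conj_quad, quadG_eq W hWsym]
    have := quadG_nonneg W hWnn ((Lm W S) ^ k *ᵥ x)
    linarith

lemma Q_zero_const (hWsym : W.IsSymm) (hWnn : ∀ i j, 0 ≤ W i j)
    (hconn : ∀ i j : Fin N, Relation.ReflTransGen (fun a b => 0 < W a b) i j)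
    (hS : ∀ i, 0 < S i) (hN : 0 < N) (p : ℕ) (x : Fin N → ℝ)
    (h : x ⬝ᵥ ((Matrix.diagonal S * (Lm W S) ^ p) *ᵥ x) = 0) :
    ∀ i j, x i = x j := by
  rcases Nat.even_or_odd p with ⟨k, hk⟩ | ⟨k, hk⟩
  · subst hk
    rw [split_even W S hWsym hS, conj_quad, diag_quad] at h
    have hz : ∀ i, ((Lm W S) ^ k *ᵥ x) i = 0 := by
      intro i
      have h1 := (Finset.sum_eq_zero_iff_of_nonneg
        (fun i _ => mul_nonneg (le_of_lt (hS i)) (sq_nonneg _))).mp h i (Finset.mem_univ i)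
      rcases mul_eq_zero.mp h1 with h2 | h2
      · exact absurd h2 (ne_of_gt (hS i))
      · have := pow_eq_zero_iff (n := 2) (by norm_num) |>.mp h2
        exact this
    exact descend W S hWsym hWnn hconn hS hN k x 0 hz
  · subst hk
    rw [split_odd W S hWsym hS, conj_quad, quadG_eq W hWsym] at h
    have hq : ∑ i, ∑ j, W i j * (((Lm W S) ^ k *ᵥ x) i - ((Lm W S) ^ k *ᵥ x) j) ^ 2 = 0 := by
      linarith
    have hyconst := quadG_zero_const W hWnn hconn _ hq
    exact descend W S hWsym hWnn hconn hS hN k x (((Lm W S) ^ k *ᵥ x) ⟨0, hN⟩)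
      (fun i => hyconst i ⟨0, hN⟩)

lemma B_symm (hWsym : W.IsSymm) (hS : ∀ i, 0 < S i) (p : ℕ) (x y : Fin N → ℝ) :
    x ⬝ᵥ ((Matrix.diagonal S * (Lm W S) ^ p) *ᵥ y)
      = y ⬝ᵥ ((Matrix.diagonal S * (Lm W S) ^ p) *ᵥ x) := by
  conv_lhs => rw [Matrix.dotProduct_mulVec, ← symm_SLk W S hWsym hS, Matrix.vecMul_transpose]
  exact dotProduct_comm _ _

lemma Q_expand' (hWsym : W.IsSymm) (hS : ∀ i, 0 < S i) (p : ℕ) (x y : Fin N → ℝ) :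
    (x + y) ⬝ᵥ ((Matrix.diagonal S * (Lm W S) ^ p) *ᵥ (x + y))
      = x ⬝ᵥ ((Matrix.diagonal S * (Lm W S) ^ p) *ᵥ x)
        + 2 * (x ⬝ᵥ ((Matrix.diagonal S * (Lm W S) ^ p) *ᵥ y))
        + y ⬝ᵥ ((Matrix.diagonal S * (Lm W S) ^ p) *ᵥ y) := by
  rw [Matrix.mulVec_add, dotProduct_add, add_dotProduct, add_dotProduct,
    B_symm W S hWsym hS p y x]
  ring

end Aux

/-- Existence and uniqueness of the discrete average interpolant: on a connected weighted
graph, the problem of minimizing the energy `E(π) = πᵀ S L^p π` (with `L = S⁻¹(D − W)`)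
over all `π ∈ ℝ^N` subject to the averaging constraints `Ave{π|Ω_r} = β_r` on pairwise
disjoint nonempty subsets `Ω_1, …, Ω_m` has a unique solution. -/
theorem interpolant_exists_unique {N m : ℕ} (hm : 0 < m)
    (W : Matrix (Fin N) (Fin N) ℝ) (hWsym : W.IsSymm)
    (hWnn : ∀ i j, 0 ≤ W i j) (hWdiag : ∀ i, W i i = 0)
    (hconn : ∀ i j : Fin N, Relation.ReflTransGen (fun a b => 0 < W a b) i j)
    (S : Fin N → ℝ) (hS : ∀ i, 0 < S i)
    (p : ℕ) (hp : 0 < p)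
    (Ω : Fin m → Finset (Fin N))
    (hdisj : ∀ r r', r ≠ r' → Disjoint (Ω r) (Ω r'))
    (hne : ∀ r, (Ω r).Nonempty)
    (β : Fin m → ℝ) :
    ∃! π : Fin N → ℝ,
      (∀ r, (∑ i ∈ Ω r, S i * π i) / (∑ i ∈ Ω r, S i) = β r) ∧
      ∀ π' : Fin N → ℝ,
        (∀ r, (∑ i ∈ Ω r, S i * π' i) / (∑ i ∈ Ω r, S i) = β r) →
        π ⬝ᵥ (Matrix.diagonal S *ᵥ
            (((Matrix.diagonal S)⁻¹ * (Matrix.diagonal (fun i => ∑ j, W i j) - W)) ^ p *ᵥ π))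
          ≤ π' ⬝ᵥ (Matrix.diagonal S *ᵥ
            (((Matrix.diagonal S)⁻¹ * (Matrix.diagonal (fun i => ∑ j, W i j) - W)) ^ p *ᵥ π')) := by
  classical
  set r0 : Fin m := ⟨0, hm⟩ with hr0
  obtain ⟨i0, hi0⟩ := hne r0
  have hN : 0 < N := i0.pos
  -- energy in normalized form
  have hE : ∀ x : Fin N → ℝ,
      x ⬝ᵥ (Matrix.diagonal S *ᵥ
        (((Matrix.diagonal S)⁻¹ * (Matrix.diagonal (fun i => ∑ j, W i j) - W)) ^ p *ᵥ x))
      = x ⬝ᵥ ((Matrix.diagonal S * (Lm W S) ^ p) *ᵥ x) := fun x => by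
    rw [Matrix.mulVec_mulVec]; rfl
  have hvol : ∀ r, 0 < ∑ i ∈ Ω r, S i := fun r =>
    Finset.sum_pos (fun i _ => hS i) (hne r)
  -- the constraint linear map
  set ℓ : (Fin N → ℝ) →ₗ[ℝ] (Fin m → ℝ) :=
    { toFun := fun x r => ∑ i ∈ Ω r, S i * x i
      map_add' := fun x y => by
        funext r
        simp only [Pi.add_apply, mul_add, Finset.sum_add_distrib]
      map_smul' := fun c x => by
        funext r
        simp only [Pi.smul_apply, smul_eq_mul, RingHom.id_apply, Finset.mul_sum]
        exact Finset.sum_congr rfl fun i _ => by ring } with hℓdef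
  have hℓapp : ∀ (x : Fin N → ℝ) (r : Fin m), ℓ x r = ∑ i ∈ Ω r, S i * x i :=
    fun x r => rfl
  -- feasibility in normalized form
  have hfe : ∀ (x : Fin N → ℝ) (r : Fin m),
      ((∑ i ∈ Ω r, S i * x i) / (∑ i ∈ Ω r, S i) = β r) ↔
      ℓ x r = β r * (∑ i ∈ Ω r, S i) := by
    intro x r
    rw [hℓapp, div_eq_iff (ne_of_gt (hvol r)), mul_comm (β r)]
  -- a distinguished feasible point
  set π₀ : Fin N → ℝ := fun i => ∑ r, if i ∈ Ω r then β r else 0 with hπ₀def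
  have hπ₀val : ∀ r, ∀ i ∈ Ω r, π₀ i = β r := by
    intro r i hi
    show (∑ r', if i ∈ Ω r' then β r' else 0) = β r
    rw [Finset.sum_eq_single r]
    · simp [hi]
    · intro r' _ hr'
      by_cases hmem : i ∈ Ω r'
      · exact absurd hi (Finset.disjoint_left.mp (hdisj r' r hr') hmem)
      · simp [hmem]
    · intro h; exact absurd (Finset.mem_univ r) h
  have hπ₀feas : ∀ r, ℓ π₀ r = β r * (∑ i ∈ Ω r, S i) := by
    intro r
    rw [hℓapp]
    rw [Finset.sum_congr rfl (fun i hi => by rw [hπ₀val r i hi])]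
    rw [← Finset.sum_mul, mul_comm]
  -- vanishing of constant functions in the kernel
  have hker0 : ∀ v : Fin N → ℝ, (∀ i j, v i = v j) → ℓ v r0 = 0 → v = 0 := by
    intro v hc h0
    rw [hℓapp] at h0
    rw [Finset.sum_congr rfl (fun i _ => by rw [hc i i0])] at h0
    rw [← Finset.sum_mul] at h0
    have hv0 : v i0 = 0 := by
      rcases mul_eq_zero.mp h0 with h | h
      · exact absurd h (ne_of_gt (hvol r0))
      · exact h
    funext i
    rw [hc i i0, hv0]; rfl
  -- the bilinear form restricted to the kernel subspace
  set V : Submodule ℝ (Fin N → ℝ) := LinearMap.ker ℓ with hV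
  set Bv : LinearMap.BilinForm ℝ V := LinearMap.mk₂ ℝ
    (fun u v : V => (u : Fin N → ℝ) ⬝ᵥ ((Matrix.diagonal S * (Lm W S) ^ p) *ᵥ (v : Fin N → ℝ)))
    (fun u u' v => by simp [add_dotProduct])
    (fun c u v => by simp [smul_dotProduct])
    (fun u v v' => by simp [Matrix.mulVec_add, dotProduct_add])
    (fun c u v => by simp [Matrix.mulVec_smul, dotProduct_smul]) with hBv
  have hBvapp : ∀ u v : V, Bv u v
      = (u : Fin N → ℝ) ⬝ᵥ ((Matrix.diagonal S * (Lm W S) ^ p) *ᵥ (v : Fin N → ℝ)) :=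
    fun u v => rfl
  have hnd : Bv.Nondegenerate := by
    refine (LinearMap.IsRefl.nondegenerate_iff_separatingLeft
      (fun a b h => by rw [hBvapp] at h ⊢; rw [B_symm W S hWsym hS]; exact h)).mpr ?_
    intro u hu
    have hq := hu u
    rw [hBvapp] at hq
    have hcu := Q_zero_const W S hWsym hWnn hconn hS hN p u hq
    have hu0 : ℓ (u : Fin N → ℝ) r0 = 0 := by
      have := LinearMap.mem_ker.mp u.2
      rw [this]; rfl
    exact Submodule.coe_eq_zero.mp (hker0 u hcu hu0)
  -- Riesz representation on V
  set φ : Module.Dual ℝ V :=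
    { toFun := fun v : V => -(π₀ ⬝ᵥ ((Matrix.diagonal S * (Lm W S) ^ p) *ᵥ (v : Fin N → ℝ)))
      map_add' := fun v v' => by simp [Matrix.mulVec_add, dotProduct_add]; try ring
      map_smul' := fun c v => by
        simp [Matrix.mulVec_smul, dotProduct_smul, smul_eq_mul]; try ring } with hφ
  set vs : V := (Bv.toDual hnd).symm φ with hvs
  have hvs' : ∀ v : V, (vs : Fin N → ℝ) ⬝ᵥ ((Matrix.diagonal S * (Lm W S) ^ p) *ᵥ (v : Fin N → ℝ))
      = -(π₀ ⬝ᵥ ((Matrix.diagonal S * (Lm W S) ^ p) *ᵥ (v : Fin N → ℝ))) := by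
    intro v
    have h1 : Bv.toDual hnd vs = φ := (Bv.toDual hnd).apply_symm_apply φ
    have h2 := LinearMap.congr_fun h1 v
    rw [LinearMap.BilinForm.toDual_def] at h2
    rw [hBvapp] at h2
    exact h2
  obtain ⟨π, hπdef⟩ : ∃ π : Fin N → ℝ, π = π₀ + (vs : Fin N → ℝ) := ⟨_, rfl⟩
  have hπfeas : ∀ r, ℓ π r = β r * (∑ i ∈ Ω r, S i) := by
    intro r
    have : ℓ π = ℓ π₀ + ℓ (vs : Fin N → ℝ) := by rw [hπdef, map_add]
    rw [this]
    have hz : ℓ (vs : Fin N → ℝ) = 0 := LinearMap.mem_ker.mp vs.2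
    rw [hz]
    simp only [Pi.add_apply, Pi.zero_apply, add_zero]
    exact hπ₀feas r
  -- orthogonality of π against the kernel
  have horth : ∀ v : Fin N → ℝ, ℓ v = 0 →
      π ⬝ᵥ ((Matrix.diagonal S * (Lm W S) ^ p) *ᵥ v) = 0 := by
    intro v hv
    have h1 : π ⬝ᵥ ((Matrix.diagonal S * (Lm W S) ^ p) *ᵥ v)
        = π₀ ⬝ᵥ ((Matrix.diagonal S * (Lm W S) ^ p) *ᵥ v)
          + (vs : Fin N → ℝ) ⬝ᵥ ((Matrix.diagonal S * (Lm W S) ^ p) *ᵥ v) := by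
      rw [hπdef, add_dotProduct]
    rw [h1, hvs' ⟨v, LinearMap.mem_ker.mpr hv⟩]
    ring
  -- minimality of π
  have hmin : ∀ π' : Fin N → ℝ, (∀ r, ℓ π' r = β r * (∑ i ∈ Ω r, S i)) →
      π ⬝ᵥ ((Matrix.diagonal S * (Lm W S) ^ p) *ᵥ π)
        ≤ π' ⬝ᵥ ((Matrix.diagonal S * (Lm W S) ^ p) *ᵥ π') := by
    intro π' hfe'
    have hvk : ℓ (π' - π) = 0 := by
      funext r
      rw [map_sub]
      simp only [Pi.sub_apply, Pi.zero_apply, hfe' r, hπfeas r, sub_self]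
    have hsplit : π' = π + (π' - π) := by abel
    calc π ⬝ᵥ ((Matrix.diagonal S * (Lm W S) ^ p) *ᵥ π)
        ≤ π ⬝ᵥ ((Matrix.diagonal S * (Lm W S) ^ p) *ᵥ π)
          + 2 * (π ⬝ᵥ ((Matrix.diagonal S * (Lm W S) ^ p) *ᵥ (π' - π)))
          + (π' - π) ⬝ᵥ ((Matrix.diagonal S * (Lm W S) ^ p) *ᵥ (π' - π)) := by
          rw [horth _ hvk]
          have := Q_nonneg W S hWsym hWnn hS p (π' - π)
          linarith
      _ = π' ⬝ᵥ ((Matrix.diagonal S * (Lm W S) ^ p) *ᵥ π') := by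
          conv_rhs => rw [hsplit]
          rw [Q_expand' W S hWsym hS]
  refine ⟨π, ⟨?_, ?_⟩, ?_⟩
  · intro r
    exact (hfe π r).mpr (hπfeas r)
  · intro π' hfe'
    rw [hE, hE]
    exact hmin π' (fun r => (hfe π' r).mp (hfe' r))
  · rintro π' ⟨hfe', hmin'⟩
    have hfeas' : ∀ r, ℓ π' r = β r * (∑ i ∈ Ω r, S i) := fun r => (hfe π' r).mp (hfe' r)
    have h1 : π ⬝ᵥ ((Matrix.diagonal S * (Lm W S) ^ p) *ᵥ π)
        ≤ π' ⬝ᵥ ((Matrix.diagonal S * (Lm W S) ^ p) *ᵥ π') := hmin π' hfeas'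
    have h2 : π' ⬝ᵥ ((Matrix.diagonal S * (Lm W S) ^ p) *ᵥ π')
        ≤ π ⬝ᵥ ((Matrix.diagonal S * (Lm W S) ^ p) *ᵥ π) := by
      have := hmin' π (fun r => (hfe π r).mpr (hπfeas r))
      rw [hE, hE] at this
      exact this
    have heq : π' ⬝ᵥ ((Matrix.diagonal S * (Lm W S) ^ p) *ᵥ π')
        = π ⬝ᵥ ((Matrix.diagonal S * (Lm W S) ^ p) *ᵥ π) := le_antisymm h2 h1
    have hvk : ℓ (π' - π) = 0 := by
      funext r
      rw [map_sub]
      simp only [Pi.sub_apply, Pi.zero_apply, hfeas' r, hπfeas r, sub_self]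
    have hsplit : π' = π + (π' - π) := by abel
    have hexp : π' ⬝ᵥ ((Matrix.diagonal S * (Lm W S) ^ p) *ᵥ π')
        = π ⬝ᵥ ((Matrix.diagonal S * (Lm W S) ^ p) *ᵥ π)
          + 2 * (π ⬝ᵥ ((Matrix.diagonal S * (Lm W S) ^ p) *ᵥ (π' - π)))
          + (π' - π) ⬝ᵥ ((Matrix.diagonal S * (Lm W S) ^ p) *ᵥ (π' - π)) := by
      conv_lhs => rw [hsplit]
      rw [Q_expand' W S hWsym hS]
    have hQv : (π' - π) ⬝ᵥ ((Matrix.diagonal S * (Lm W S) ^ p) *ᵥ (π' - π)) = 0 := by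
      rw [heq, horth _ hvk] at hexp
      linarith
    have hcv := Q_zero_const W S hWsym hWnn hconn hS hN p (π' - π) hQv
    have hv0 : π' - π = 0 := by
      apply hker0 _ hcv
      rw [hvk]; rfl
    have := sub_eq_zero.mp hv0
    exact this
end

section
/- Let W be a symmetric N×N real matrix with nonnegative entries, zero diagonal, and connected associated graph; let S be diagonal with positive diagonal entries, D the degree matrix, L = S^{-1}(D − W), p a positive integer, and G(i,j) = Σ_{n=1}^{N−1} φ_n(i)φ_n(j)/λ_n^p the p-harmonic kernel built from the S-orthonormal generalized eigenpairs. Let Ω_1, …, Ω_m be pairwise disjoint nonempty subsets of {1,…,N}, β_1, …, β_m real, and let π* be the unique minimizer of E(π) = π^T S L^p π subject to Ave{π|Ω_r} = β_r. Then there exist real coefficients c_0, c_1, …, c_m with Σ_{r=1}^m c_r Vol(Ω_r) = 0 such that π*(i) = c_0 + Σ_{r=1}^m c_r Σ_{j∈Ω_r} S_jj G(i,j) for all i. -/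
open Matrix Finset RealInnerProductSpace

lemma quadAux (a b : ℝ) (h : ∀ t : ℝ, 0 ≤ 2*t*a + t^2*b) : a = 0 := by
  have h1 := h (-a/(b^2+1))
  have hb : (0:ℝ) < b^2+1 := by positivity
  have h2 : 0 ≤ (-2*a^2*(b^2+1) + a^2*b) := by
    calc -2*a^2*(b^2+1) + a^2*b = (2 * (-a/(b^2+1)) * a + (-a/(b^2+1))^2*b) * ((b^2+1)*(b^2+1)) := by
          field_simp
      _ ≥ 0 := by nlinarith [h1, mul_pos hb hb]
  nlinarith [sq_nonneg a, sq_nonneg (b-1), sq_nonneg b, sq_nonneg (a*(b-1))]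

lemma spanAux {N m : ℕ} (u : Fin m → EuclideanSpace ℝ (Fin N))
    (v : EuclideanSpace ℝ (Fin N))
    (h : ∀ w : EuclideanSpace ℝ (Fin N), (∀ r, ⟪u r, w⟫ = 0) → ⟪v, w⟫ = 0) :
    ∃ d : Fin m → ℝ, ∑ r, d r • u r = v := by
  rw [← Submodule.mem_span_range_iff_exists_fun ℝ]
  rw [← Submodule.orthogonal_orthogonal (Submodule.span ℝ (Set.range u))]
  rw [Submodule.mem_orthogonal]
  intro w hw
  have h2 : ∀ r, ⟪u r, w⟫ = 0 := by
    intro r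
    exact hw (u r) (Submodule.subset_span ⟨r, rfl⟩)
  exact (real_inner_comm v w).trans (h w h2)

/-- Representation of the discrete average interpolant in terms of the p-harmonic Green's
kernel: the unique minimizer `π*` of `E(π) = πᵀ S L^p π` subject to `Ave{π|Ω_r} = β_r`
can be written as `π*(i) = c_0 + ∑_r c_r ∑_{j∈Ω_r} S_jj G(i,j)` with
`∑_r c_r Vol(Ω_r) = 0`, where `G(i,j) = ∑_{n≥1} φ_n(i)φ_n(j)/λ_n^p`. -/
theorem interpolant_kernel_representation {N m : ℕ} (hm : 0 < m) [NeZero N]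
    (W : Matrix (Fin N) (Fin N) ℝ) (hWsym : W.IsSymm)
    (hWnn : ∀ i j, 0 ≤ W i j) (hWdiag : ∀ i, W i i = 0)
    (hconn : ∀ i j : Fin N, Relation.ReflTransGen (fun a b => 0 < W a b) i j)
    (S : Fin N → ℝ) (hS : ∀ i, 0 < S i)
    (lam : Fin N → ℝ) (φ : Fin N → Fin N → ℝ)
    (hlam0 : lam 0 = 0) (hlamPos : ∀ n : Fin N, n ≠ 0 → 0 < lam n)
    (hmono : Monotone lam)
    (heig : ∀ n, (Matrix.diagonal (fun i => ∑ j, W i j) - W) *ᵥ φ n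
      = lam n • (Matrix.diagonal S *ᵥ φ n))
    (horth : ∀ n n', φ n ⬝ᵥ (Matrix.diagonal S *ᵥ φ n') = if n = n' then 1 else 0)
    (p : ℕ) (hp : 0 < p)
    (Ω : Fin m → Finset (Fin N))
    (hdisj : ∀ r r', r ≠ r' → Disjoint (Ω r) (Ω r'))
    (hne : ∀ r, (Ω r).Nonempty)
    (β : Fin m → ℝ) (πstar : Fin N → ℝ)
    (hfeas : ∀ r, (∑ i ∈ Ω r, S i * πstar i) / (∑ i ∈ Ω r, S i) = β r)
    (hmin : ∀ π' : Fin N → ℝ,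
      (∀ r, (∑ i ∈ Ω r, S i * π' i) / (∑ i ∈ Ω r, S i) = β r) →
      πstar ⬝ᵥ (Matrix.diagonal S *ᵥ
          (((Matrix.diagonal S)⁻¹ * (Matrix.diagonal (fun i => ∑ j, W i j) - W)) ^ p *ᵥ πstar))
        ≤ π' ⬝ᵥ (Matrix.diagonal S *ᵥ
          (((Matrix.diagonal S)⁻¹ * (Matrix.diagonal (fun i => ∑ j, W i j) - W)) ^ p *ᵥ π'))) :
    ∃ (c₀ : ℝ) (c : Fin m → ℝ),
      (∑ r, c r * ∑ i ∈ Ω r, S i) = 0 ∧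
      ∀ i, πstar i = c₀ + ∑ r, c r *
        ∑ j ∈ Ω r, S j * (∑ n ∈ Finset.univ.erase 0, φ n i * φ n j / lam n ^ p) := by
  classical
  set A := Matrix.diagonal (fun i => ∑ j, W i j) - W with hA
  set Sm := Matrix.diagonal S with hSmdef
  have hSnz : ∀ i, S i ≠ 0 := fun i => (hS i).ne'
  -- inverse of Sm
  have hSmInv : Sm⁻¹ = Matrix.diagonal (fun i => (S i)⁻¹) := by
    apply Matrix.inv_eq_right_inv
    rw [hSmdef, Matrix.diagonal_mul_diagonal]
    ext i j
    by_cases h : i = j <;> simp [Matrix.diagonal, h, Matrix.one_apply, mul_inv_cancel₀ (hSnz j), inv_mul_cancel₀ (hSnz j)]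
  have hSS : Sm * Sm⁻¹ = 1 := by
    rw [hSmInv, hSmdef, Matrix.diagonal_mul_diagonal]
    ext i j
    by_cases h : i = j <;> simp [Matrix.diagonal, h, Matrix.one_apply, mul_inv_cancel₀ (hSnz j), inv_mul_cancel₀ (hSnz j)]
  have hSS' : Sm⁻¹ * Sm = 1 := by
    rw [hSmInv, hSmdef, Matrix.diagonal_mul_diagonal]
    ext i j
    by_cases h : i = j <;> simp [Matrix.diagonal, h, Matrix.one_apply, mul_inv_cancel₀ (hSnz j), inv_mul_cancel₀ (hSnz j)]
  set C := Sm⁻¹ * A with hCdef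
  set Mp := Sm * C ^ p with hMpdef
  have hAsymm : Aᵀ = A := by
    rw [hA, Matrix.transpose_sub, Matrix.diagonal_transpose, hWsym]
  have hASmC : A = Sm * C := by
    rw [hCdef, ← Matrix.mul_assoc, hSS, Matrix.one_mul]
  -- symmetry of Sm * C^k
  have hMsymm : ∀ k : ℕ, (Sm * C ^ k)ᵀ = Sm * C ^ k := by
    intro k
    induction k with
    | zero => simp [hSmdef, Matrix.diagonal_transpose]
    | succ k ih =>
      have hCt : Cᵀ = A * Sm⁻¹ := by
        rw [hCdef, Matrix.transpose_mul, hAsymm, hSmInv, Matrix.diagonal_transpose, ← hSmInv]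
      calc (Sm * C ^ (k+1))ᵀ = (Sm * C ^ k * C)ᵀ := by rw [pow_succ, Matrix.mul_assoc]
        _ = Cᵀ * (Sm * C ^ k) := by rw [Matrix.transpose_mul, ih]
        _ = A * (Sm⁻¹ * (Sm * C ^ k)) := by rw [hCt, Matrix.mul_assoc]
        _ = A * C ^ k := by rw [← Matrix.mul_assoc Sm⁻¹, hSS', Matrix.one_mul]
        _ = Sm * C ^ (k+1) := by rw [hASmC, Matrix.mul_assoc, ← pow_succ']
  have hMpsymm : Mpᵀ = Mp := hMsymm p
  -- symmetry of the bilinear form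
  have hBsym : ∀ x y : Fin N → ℝ, x ⬝ᵥ (Mp *ᵥ y) = y ⬝ᵥ (Mp *ᵥ x) := by
    intro x y
    rw [dotProduct_mulVec, ← Matrix.mulVec_transpose, hMpsymm, dotProduct_comm]
  -- rewrite hmin in terms of Mp
  have hmin' : ∀ π' : Fin N → ℝ,
      (∀ r, (∑ i ∈ Ω r, S i * π' i) / (∑ i ∈ Ω r, S i) = β r) →
      πstar ⬝ᵥ (Mp *ᵥ πstar) ≤ π' ⬝ᵥ (Mp *ᵥ π') := by
    intro π' h
    have := hmin π' h
    simpa [hMpdef, ← Matrix.mulVec_mulVec] using this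
  -- first-order condition
  have hfoc : ∀ η : Fin N → ℝ, (∀ r, ∑ i ∈ Ω r, S i * η i = 0) →
      πstar ⬝ᵥ (Mp *ᵥ η) = 0 := by
    intro η hη
    apply quadAux _ (η ⬝ᵥ (Mp *ᵥ η))
    intro t
    have hfeas' : ∀ r, (∑ i ∈ Ω r, S i * (πstar + t • η) i) / (∑ i ∈ Ω r, S i) = β r := by
      intro r
      have hsum : ∑ i ∈ Ω r, S i * (πstar + t • η) i = ∑ i ∈ Ω r, S i * πstar i := by
        simp only [Pi.add_apply, Pi.smul_apply, smul_eq_mul, mul_add, Finset.sum_add_distrib]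
        have h2 : ∑ i ∈ Ω r, S i * (t * η i) = t * ∑ i ∈ Ω r, S i * η i := by
          rw [Finset.mul_sum]; apply Finset.sum_congr rfl; intros; ring
        rw [h2, hη r, mul_zero, add_zero]
      rw [hsum, hfeas r]
    have h1 := hmin' _ hfeas'
    have hexp : (πstar + t • η) ⬝ᵥ (Mp *ᵥ (πstar + t • η))
        = πstar ⬝ᵥ (Mp *ᵥ πstar) + (2*t*(πstar ⬝ᵥ (Mp *ᵥ η)) + t^2*(η ⬝ᵥ (Mp *ᵥ η))) := by
      simp only [Matrix.mulVec_add, Matrix.mulVec_smul, dotProduct_add,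
        add_dotProduct, dotProduct_smul, smul_dotProduct, smul_eq_mul]
      rw [hBsym η πstar]; ring
    rw [hexp] at h1
    linarith
  -- Lagrange multipliers
  obtain ⟨d, hd⟩ : ∃ d : Fin m → ℝ,
      ∀ i, (Mp *ᵥ πstar) i = ∑ r, d r * (if i ∈ Ω r then S i else 0) := by
    obtain ⟨d, hd0⟩ := spanAux
      (fun r => WithLp.toLp 2 (fun i => if i ∈ Ω r then S i else 0))
      (WithLp.toLp 2 (Mp *ᵥ πstar)) (by
        intro w hw
        have hw' : ∀ r, ∑ i ∈ Ω r, S i * w i = 0 := by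
          intro r
          have := hw r
          simp only [PiLp.inner_apply, RCLike.inner_apply, conj_trivial, PiLp.toLp_apply] at this
          calc ∑ i ∈ Ω r, S i * w i
              = ∑ i, if i ∈ Ω r then S i * w i else 0 := by
                rw [Finset.sum_ite_mem, Finset.univ_inter]
            _ = ∑ i, (if i ∈ Ω r then S i else 0) * w i := by
                apply Finset.sum_congr rfl; intro i _
                by_cases h : i ∈ Ω r <;> simp [h]
            _ = 0 := by simpa only [mul_comm] using this
        have h0 := hfoc (fun i => w i) hw'
        simp only [PiLp.inner_apply, RCLike.inner_apply, conj_trivial, PiLp.toLp_apply]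
        rw [Finset.sum_congr rfl (fun i _ => mul_comm (w i) ((Mp *ᵥ πstar) i))]
        calc ∑ i, (Mp *ᵥ πstar) i * w i = (Mp *ᵥ πstar) ⬝ᵥ (fun i => w i) := rfl
          _ = (fun i => w i) ⬝ᵥ (Mp *ᵥ πstar) := dotProduct_comm _ _
          _ = πstar ⬝ᵥ (Mp *ᵥ (fun i => w i)) := hBsym (fun i => w i) πstar
          _ = 0 := h0)
    refine ⟨d, fun i => ?_⟩
    have h1 := congrArg (fun v : EuclideanSpace ℝ (Fin N) => v i) hd0
    simp only [PiLp.toLp_apply, WithLp.ofLp_sum, WithLp.ofLp_smul] at h1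
    rw [← h1, Finset.sum_apply]
    apply Finset.sum_congr rfl; intro r _
    by_cases h : i ∈ Ω r <;> simp [h]
  -- eigenvector property for C^p
  have hCeig : ∀ n, C *ᵥ φ n = lam n • φ n := by
    intro n
    rw [hCdef, ← Matrix.mulVec_mulVec, heig n, Matrix.mulVec_smul, Matrix.mulVec_mulVec,
      hSS', Matrix.one_mulVec]
  have hCp : ∀ q n, C ^ q *ᵥ φ n = (lam n ^ q) • φ n := by
    intro q n
    induction q with
    | zero => simp [Matrix.one_mulVec]
    | succ q ih =>
      rw [pow_succ', ← Matrix.mulVec_mulVec, ih, Matrix.mulVec_smul, hCeig n, smul_smul,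
        pow_succ, mul_comm]
  -- key scalar identity
  have hSsym : ∀ x y : Fin N → ℝ, x ⬝ᵥ (Sm *ᵥ y) = y ⬝ᵥ (Sm *ᵥ x) := by
    intro x y
    rw [dotProduct_mulVec, ← Matrix.mulVec_transpose, hSmdef,
      Matrix.diagonal_transpose, ← hSmdef, dotProduct_comm]
  have hkey : ∀ n, lam n ^ p * (φ n ⬝ᵥ (Sm *ᵥ πstar))
      = ∑ r, d r * ∑ j ∈ Ω r, S j * φ n j := by
    intro n
    have e1 : φ n ⬝ᵥ (Mp *ᵥ πstar) = lam n ^ p * (φ n ⬝ᵥ (Sm *ᵥ πstar)) := by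
      rw [hBsym, hMpdef, ← Matrix.mulVec_mulVec, hCp p n, Matrix.mulVec_smul,
        dotProduct_smul, smul_eq_mul, hSsym]
    have e2 : φ n ⬝ᵥ (Mp *ᵥ πstar) = ∑ r, d r * ∑ j ∈ Ω r, S j * φ n j := by
      simp only [dotProduct]
      simp_rw [hd, Finset.mul_sum]
      rw [Finset.sum_comm]
      apply Finset.sum_congr rfl; intro r _
      calc ∑ i, φ n i * (d r * if i ∈ Ω r then S i else 0)
          = ∑ i, if i ∈ Ω r then d r * (S i * φ n i) else 0 := by
            apply Finset.sum_congr rfl; intro i _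
            by_cases h : i ∈ Ω r <;> simp [h] <;> ring
        _ = ∑ i ∈ Ω r, d r * (S i * φ n i) := by rw [Finset.sum_ite_mem, Finset.univ_inter]
    rw [← e1, e2]
  -- φ 0 is constant
  have hA0 : A *ᵥ φ 0 = 0 := by rw [heig 0, hlam0, zero_smul]
  have hq0 : φ 0 ⬝ᵥ (A *ᵥ φ 0) = 0 := by rw [hA0, dotProduct_zero]
  have hdot : φ 0 ⬝ᵥ (A *ᵥ φ 0)
      = ∑ i, ∑ j, (W i j * (φ 0 i)^2 - W i j * (φ 0 i * φ 0 j)) := by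
    rw [hA, Matrix.sub_mulVec, dotProduct_sub]
    simp only [dotProduct, Matrix.mulVec_diagonal, Matrix.mulVec]
    rw [← Finset.sum_sub_distrib]
    apply Finset.sum_congr rfl; intro i _
    rw [Finset.sum_sub_distrib]
    congr 1
    · have hdiag : ∑ x, Matrix.diagonal (fun i => ∑ j, W i j) i x * φ 0 x
          = (∑ j, W i j) * φ 0 i := by
        rw [Finset.sum_eq_single i]
        · rw [Matrix.diagonal_apply_eq]
        · intro b _ hb
          rw [Matrix.diagonal_apply_ne _ (Ne.symm hb), zero_mul]
        · intro h; exact absurd (Finset.mem_univ i) h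
      rw [hdiag, Finset.sum_mul, Finset.mul_sum]
      apply Finset.sum_congr rfl; intros; ring
    · rw [Finset.mul_sum]
      apply Finset.sum_congr rfl; intros; ring
  have hQ : ∑ i, ∑ j, W i j * (φ 0 i - φ 0 j)^2 = 0 := by
    have e3 : ∑ i, ∑ j, W i j * (φ 0 i - φ 0 j)^2
        = ∑ i, ∑ j, (W i j * (φ 0 i)^2 - W i j * (φ 0 i * φ 0 j))
          + ∑ i, ∑ j, (W i j * (φ 0 j)^2 - W i j * (φ 0 i * φ 0 j)) := by
      rw [← Finset.sum_add_distrib]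
      apply Finset.sum_congr rfl; intro i _
      rw [← Finset.sum_add_distrib]
      apply Finset.sum_congr rfl; intro j _
      ring
    have e4 : ∑ i, ∑ j, (W i j * (φ 0 j)^2 - W i j * (φ 0 i * φ 0 j))
        = ∑ i, ∑ j, (W i j * (φ 0 i)^2 - W i j * (φ 0 i * φ 0 j)) := by
      rw [Finset.sum_comm]
      apply Finset.sum_congr rfl; intro i _
      apply Finset.sum_congr rfl; intro j _
      rw [hWsym.apply i j]
      ring
    rw [e3, e4, ← hdot, hq0]
    ring
  have hpair : ∀ a b, W a b * (φ 0 a - φ 0 b)^2 = 0 := by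
    intro a b
    have hnn2 : ∀ i ∈ Finset.univ (α := Fin N), (0:ℝ) ≤ ∑ j, W i j * (φ 0 i - φ 0 j)^2 :=
      fun i _ => Finset.sum_nonneg fun j _ => mul_nonneg (hWnn i j) (sq_nonneg _)
    have h1 := (Finset.sum_eq_zero_iff_of_nonneg hnn2).mp hQ a (Finset.mem_univ a)
    exact (Finset.sum_eq_zero_iff_of_nonneg
      (fun j _ => mul_nonneg (hWnn a j) (sq_nonneg _))).mp h1 b (Finset.mem_univ b)
  have hstep : ∀ a b : Fin N, 0 < W a b → φ 0 a = φ 0 b := by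
    intro a b hab
    have h2 : (φ 0 a - φ 0 b)^2 = 0 :=
      (mul_eq_zero.mp (hpair a b)).resolve_left hab.ne'
    have h3 : φ 0 a - φ 0 b = 0 := by
      exact pow_eq_zero_iff (by norm_num) |>.mp h2
    exact sub_eq_zero.mp h3
  have hconst : ∀ i j, φ 0 i = φ 0 j := by
    intro i j
    induction hconn i j with
    | refl => rfl
    | tail _ h ih => exact ih.trans (hstep _ _ h)
  set k := φ 0 0 with hk
  have hknz : k ≠ 0 := by
    intro h0
    have h1 : φ 0 ⬝ᵥ (Sm *ᵥ φ 0) = 0 := by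
      simp only [dotProduct]
      apply Finset.sum_eq_zero
      intro i _
      have h2 : φ 0 i = 0 := (hconst i 0).trans h0
      rw [h2, zero_mul]
    rw [horth 0 0] at h1
    simp at h1
  -- side condition
  have hside : ∑ r, d r * ∑ i ∈ Ω r, S i = 0 := by
    have h0 := hkey 0
    rw [hlam0, zero_pow hp.ne', zero_mul] at h0
    have h3 : (∑ r, d r * ∑ i ∈ Ω r, S i) * k = 0 := by
      calc (∑ r, d r * ∑ i ∈ Ω r, S i) * k
          = ∑ r, d r * ∑ j ∈ Ω r, S j * φ 0 j := by
            rw [Finset.sum_mul]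
            apply Finset.sum_congr rfl; intro r _
            rw [Finset.mul_sum, Finset.mul_sum, Finset.sum_mul]
            apply Finset.sum_congr rfl; intro j _
            rw [hconst j 0, ← hk]
            ring
        _ = 0 := h0.symm
    exact (mul_eq_zero.mp h3).resolve_right hknz
  -- completeness
  have hPhi : ∀ i j, ∑ n, φ n i * φ n j = if i = j then (S i)⁻¹ else 0 := by
    have h1 : (Matrix.of fun n i => φ n i) * (Sm * (Matrix.of fun n i => φ n i)ᵀ) = 1 := by
      ext n n'
      have h2 := horth n n'
      simp only [dotProduct, hSmdef, Matrix.mulVec_diagonal] at h2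
      simp only [Matrix.mul_apply, Matrix.of_apply, Matrix.transpose_apply, hSmdef,
        Matrix.diagonal_apply, ite_mul, zero_mul, Finset.sum_ite_eq, Finset.mem_univ,
        if_true, Matrix.one_apply]
      exact h2
    have h2 : (Sm * (Matrix.of fun n i => φ n i)ᵀ) * (Matrix.of fun n i => φ n i) = 1 :=
      mul_eq_one_comm.mp h1
    intro i j
    have h3 := congrFun (congrFun h2 i) j
    simp only [Matrix.mul_apply, Matrix.of_apply, Matrix.transpose_apply, hSmdef,
      Matrix.diagonal_apply, ite_mul, zero_mul, Finset.sum_ite_eq, Finset.mem_univ,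
      if_true, Matrix.one_apply] at h3
    have h4 : S i * ∑ n, φ n i * φ n j = if i = j then 1 else 0 := by
      rw [Finset.mul_sum, ← h3]
      apply Finset.sum_congr rfl; intros; ring
    by_cases h : i = j
    · rw [if_pos h] at h4 ⊢
      exact eq_inv_of_mul_eq_one_left (by rw [mul_comm]; exact h4)
    · rw [if_neg h] at h4 ⊢
      exact (mul_eq_zero.mp h4).resolve_left (hSnz i)
  have hcomp : ∀ x : Fin N → ℝ, ∀ i, ∑ n, (φ n ⬝ᵥ (Sm *ᵥ x)) * φ n i = x i := by
    intro x i
    have e1 : ∀ n, φ n ⬝ᵥ (Sm *ᵥ x) = ∑ j, φ n j * (S j * x j) := by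
      intro n; simp [dotProduct, hSmdef, Matrix.mulVec_diagonal]
    calc ∑ n, (φ n ⬝ᵥ (Sm *ᵥ x)) * φ n i
        = ∑ n, ∑ j, (S j * x j) * (φ n j * φ n i) := by
          apply Finset.sum_congr rfl; intro n _
          rw [e1, Finset.sum_mul]
          apply Finset.sum_congr rfl; intros; ring
      _ = ∑ j, (S j * x j) * ∑ n, (φ n j * φ n i) := by
          rw [Finset.sum_comm]
          apply Finset.sum_congr rfl; intros
          rw [Finset.mul_sum]
      _ = ∑ j, (S j * x j) * (if j = i then (S j)⁻¹ else 0) := by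
          apply Finset.sum_congr rfl; intro j _
          rw [hPhi j i]
      _ = x i := by
          rw [Finset.sum_eq_single i]
          · rw [if_pos rfl, mul_comm, ← mul_assoc, inv_mul_cancel₀ (hSnz i), one_mul]
          · intro b _ hb; rw [if_neg hb, mul_zero]
          · intro h; exact absurd (Finset.mem_univ i) h
  -- conclusion
  refine ⟨(φ 0 ⬝ᵥ (Sm *ᵥ πstar)) * k, d, hside, ?_⟩
  intro i
  rw [← hcomp πstar i,
    ← Finset.add_sum_erase Finset.univ (fun n => (φ n ⬝ᵥ (Sm *ᵥ πstar)) * φ n i)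
      (Finset.mem_univ 0)]
  congr 1
  · rw [hconst i 0, ← hk]
  · calc ∑ n ∈ Finset.univ.erase 0, (φ n ⬝ᵥ (Sm *ᵥ πstar)) * φ n i
        = ∑ n ∈ Finset.univ.erase 0,
            ∑ r, d r * ∑ j ∈ Ω r, S j * (φ n i * φ n j / lam n ^ p) := by
          apply Finset.sum_congr rfl; intro n hn
          have hn0 : n ≠ 0 := Finset.ne_of_mem_erase hn
          have hlp : lam n ^ p ≠ 0 := pow_ne_zero _ (hlamPos n hn0).ne'
          have hrhs : ∀ r, ∑ j ∈ Ω r, S j * (φ n i * φ n j / lam n ^ p)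
              = (∑ j ∈ Ω r, S j * φ n j) * (φ n i / lam n ^ p) := by
            intro r; rw [Finset.sum_mul]
            apply Finset.sum_congr rfl; intros; ring
          calc (φ n ⬝ᵥ (Sm *ᵥ πstar)) * φ n i
              = (lam n ^ p * (φ n ⬝ᵥ (Sm *ᵥ πstar))) * (φ n i / lam n ^ p) := by
                field_simp
            _ = (∑ r, d r * ∑ j ∈ Ω r, S j * φ n j) * (φ n i / lam n ^ p) := by
                rw [hkey n]
            _ = ∑ r, d r * ∑ j ∈ Ω r, S j * (φ n i * φ n j / lam n ^ p) := by
                rw [Finset.sum_mul]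
                apply Finset.sum_congr rfl; intro r _
                rw [mul_assoc, hrhs r]
      _ = ∑ r, d r * ∑ j ∈ Ω r, S j *
            ∑ n ∈ Finset.univ.erase 0, (φ n i * φ n j / lam n ^ p) := by
          rw [Finset.sum_comm]
          apply Finset.sum_congr rfl; intro r _
          calc ∑ n ∈ Finset.univ.erase 0, d r * ∑ j ∈ Ω r, S j * (φ n i * φ n j / lam n ^ p)
              = d r * ∑ n ∈ Finset.univ.erase 0, ∑ j ∈ Ω r, S j * (φ n i * φ n j / lam n ^ p) :=
                (Finset.mul_sum _ _ _).symm
            _ = d r * ∑ j ∈ Ω r, ∑ n ∈ Finset.univ.erase 0, S j * (φ n i * φ n j / lam n ^ p) := by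
                rw [Finset.sum_comm]
            _ = d r * ∑ j ∈ Ω r, S j * ∑ n ∈ Finset.univ.erase 0, (φ n i * φ n j / lam n ^ p) := by
                congr 1
                apply Finset.sum_congr rfl; intros
                rw [Finset.mul_sum]
end

section
/- Let W be a symmetric N×N real matrix with nonnegative entries, zero diagonal, and connected associated graph; let S be diagonal with positive diagonal entries, D the degree matrix, L = S^{-1}(D − W), and p a positive integer. Let Ω_1, …, Ω_m be pairwise disjoint nonempty subsets of {1,…,N} with indicator vectors 1_{Ω_r}, β_1, …, β_m real, and let π* be the unique minimizer of E(π) = π^T S L^p π subject to Ave{π|Ω_r} = β_r. Then there exist Lagrange multipliers μ_1, …, μ_m ∈ ℝ such that 2 L^p π* = Σ_{r=1}^m μ_r 1_{Ω_r}, and necessarily Σ_{r=1}^m μ_r Vol(Ω_r) = 0. -/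
open Matrix Finset

/-- If `a*t + b*t^2 ≥ 0` for all real `t`, then `a = 0`. -/
lemma quad_coeff_zero {a b : ℝ} (h : ∀ t : ℝ, 0 ≤ a * t + b * t ^ 2) : a = 0 := by
  by_contra ha
  have hb : 0 ≤ b := by have h1 := h 1; have h2 := h (-1); nlinarith
  have hpos : (0:ℝ) < 2*b+1 := by linarith
  have h3 := h (-a / (2 * b + 1))
  have key : 0 ≤ (a * (-a / (2 * b + 1)) + b * (-a / (2 * b + 1)) ^ 2) * (2*b+1)^2 :=
    mul_nonneg h3 (by positivity)
  have e : (a * (-a / (2 * b + 1)) + b * (-a / (2 * b + 1)) ^ 2) * (2*b+1)^2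
      = a^2 * (-b-1) * (2*b+1) / (2*b+1) := by
    field_simp; ring
  rw [e, mul_div_cancel_right₀ _ hpos.ne'] at key
  have ha2 : 0 < a^2 := by positivity
  nlinarith [mul_nonneg hb ha2.le]

/-- Discrete Euler–Lagrange condition for the average interpolant: the unique minimizer
`π*` of `E(π) = πᵀ S L^p π` subject to `Ave{π|Ω_r} = β_r` satisfies
`2 L^p π* = ∑_r μ_r 1_{Ω_r}` for some Lagrange multipliers `μ_r`, which necessarily obey
the compatibility condition `∑_r μ_r Vol(Ω_r) = 0`. -/
theorem interpolant_euler_lagrange {N m : ℕ} (hm : 0 < m)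
    (W : Matrix (Fin N) (Fin N) ℝ) (hWsym : W.IsSymm)
    (hWnn : ∀ i j, 0 ≤ W i j) (hWdiag : ∀ i, W i i = 0)
    (hconn : ∀ i j : Fin N, Relation.ReflTransGen (fun a b => 0 < W a b) i j)
    (S : Fin N → ℝ) (hS : ∀ i, 0 < S i)
    (p : ℕ) (hp : 0 < p)
    (Ω : Fin m → Finset (Fin N))
    (hdisj : ∀ r r', r ≠ r' → Disjoint (Ω r) (Ω r'))
    (hne : ∀ r, (Ω r).Nonempty)
    (β : Fin m → ℝ) (πstar : Fin N → ℝ)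
    (hfeas : ∀ r, (∑ i ∈ Ω r, S i * πstar i) / (∑ i ∈ Ω r, S i) = β r)
    (hmin : ∀ π' : Fin N → ℝ,
      (∀ r, (∑ i ∈ Ω r, S i * π' i) / (∑ i ∈ Ω r, S i) = β r) →
      πstar ⬝ᵥ (Matrix.diagonal S *ᵥ
          (((Matrix.diagonal S)⁻¹ * (Matrix.diagonal (fun i => ∑ j, W i j) - W)) ^ p *ᵥ πstar))
        ≤ π' ⬝ᵥ (Matrix.diagonal S *ᵥ
          (((Matrix.diagonal S)⁻¹ * (Matrix.diagonal (fun i => ∑ j, W i j) - W)) ^ p *ᵥ π'))) :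
    ∃ μ : Fin m → ℝ,
      (2 : ℝ) • (((Matrix.diagonal S)⁻¹ * (Matrix.diagonal (fun i => ∑ j, W i j) - W)) ^ p
          *ᵥ πstar)
        = ∑ r, μ r • (fun i => if i ∈ Ω r then (1 : ℝ) else 0) ∧
      ∑ r, μ r * ∑ i ∈ Ω r, S i = 0 := by
  classical
  set M : Matrix (Fin N) (Fin N) ℝ := Matrix.diagonal (fun i => ∑ j, W i j) - W with hMdef
  set Sd : Matrix (Fin N) (Fin N) ℝ := Matrix.diagonal S with hSdef
  set L : Matrix (Fin N) (Fin N) ℝ := Sd⁻¹ * M with hLdef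
  set g : Fin N → ℝ := L ^ p *ᵥ πstar with hgdef
  -- basic matrix facts
  have hdet : IsUnit Sd.det := by
    rw [hSdef, Matrix.det_diagonal]
    exact isUnit_iff_ne_zero.mpr (ne_of_gt (Finset.prod_pos fun i _ => hS i))
  have hSS : Sd * Sd⁻¹ = 1 := Matrix.mul_nonsing_inv _ hdet
  have hSS' : Sd⁻¹ * Sd = 1 := Matrix.nonsing_inv_mul _ hdet
  have hSL : Sd * L = M := by rw [hLdef, ← Matrix.mul_assoc, hSS, Matrix.one_mul]
  have hkey : ∀ n, Sd * L ^ n = (M * Sd⁻¹) ^ n * Sd := by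
    intro n
    induction n with
    | zero => simp
    | succ n ih =>
      rw [pow_succ, ← Matrix.mul_assoc, ih, pow_succ, Matrix.mul_assoc, Matrix.mul_assoc]
      congr 1
      rw [Matrix.mul_assoc, hSS', Matrix.mul_one, hSL]
  have hMsym : Mᵀ = M := by
    rw [hMdef, Matrix.transpose_sub, Matrix.diagonal_transpose, hWsym]
  have hSdsym : Sdᵀ = Sd := by rw [hSdef, Matrix.diagonal_transpose]
  have hSinvsym : (Sd⁻¹)ᵀ = Sd⁻¹ := by rw [Matrix.transpose_nonsing_inv, hSdsym]
  have hAsym : (Sd * L ^ p)ᵀ = Sd * L ^ p := by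
    rw [hkey p, Matrix.transpose_mul, hSdsym, Matrix.transpose_pow, Matrix.transpose_mul,
      hSinvsym, hMsym, ← hLdef, ← hkey p]
  -- symmetry of the quadratic form
  have hdot : ∀ x y : Fin N → ℝ,
      x ⬝ᵥ (Sd *ᵥ (L ^ p *ᵥ y)) = y ⬝ᵥ (Sd *ᵥ (L ^ p *ᵥ x)) := by
    intro x y
    rw [Matrix.mulVec_mulVec, Matrix.mulVec_mulVec, Matrix.dotProduct_mulVec,
      ← Matrix.mulVec_transpose, hAsym, dotProduct_comm]
  -- the variational argument
  have hvar : ∀ v : Fin N → ℝ, (∀ r, ∑ i ∈ Ω r, S i * v i = 0) →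
      v ⬝ᵥ (Sd *ᵥ (L ^ p *ᵥ πstar)) = 0 := by
    intro v hv
    have hquad : ∀ t : ℝ,
        0 ≤ (2 * (v ⬝ᵥ (Sd *ᵥ (L ^ p *ᵥ πstar)))) * t + (v ⬝ᵥ (Sd *ᵥ (L ^ p *ᵥ v))) * t ^ 2 := by
      intro t
      have hfeas' : ∀ r, (∑ i ∈ Ω r, S i * (πstar + t • v) i) / (∑ i ∈ Ω r, S i) = β r := by
        intro r
        have hsplit : ∑ i ∈ Ω r, S i * (πstar + t • v) i
            = (∑ i ∈ Ω r, S i * πstar i) + t * ∑ i ∈ Ω r, S i * v i := by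
          rw [Finset.mul_sum, ← Finset.sum_add_distrib]
          refine Finset.sum_congr rfl fun i _ => ?_
          simp [Pi.add_apply, Pi.smul_apply, smul_eq_mul]; ring
        rw [hsplit, hv r, mul_zero, add_zero, hfeas r]
      have h := hmin _ hfeas'
      have hc := hdot πstar v
      have expand : (πstar + t • v) ⬝ᵥ (Sd *ᵥ (L ^ p *ᵥ (πstar + t • v)))
          = πstar ⬝ᵥ (Sd *ᵥ (L ^ p *ᵥ πstar))
            + (2 * (v ⬝ᵥ (Sd *ᵥ (L ^ p *ᵥ πstar)))) * t
            + (v ⬝ᵥ (Sd *ᵥ (L ^ p *ᵥ v))) * t ^ 2 := by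
        simp only [Matrix.mulVec_add, Matrix.mulVec_smul, dotProduct_add, add_dotProduct,
          dotProduct_smul, smul_dotProduct, smul_eq_mul]
        rw [hc]; ring
      rw [expand] at h
      linarith
    have := quad_coeff_zero hquad
    linarith
  -- value of the dot product against special vectors
  have hSg : ∀ i, (Sd *ᵥ (L ^ p *ᵥ πstar)) i = S i * g i := by
    intro i
    rw [hSdef, Matrix.mulVec_diagonal, hgdef]
  -- outside all Ω r, g vanishes
  have hout : ∀ i : Fin N, (∀ r, i ∉ Ω r) → g i = 0 := by
    intro i hi
    have hv : ∀ r, ∑ k ∈ Ω r, S k * (Pi.single i 1 : Fin N → ℝ) k = 0 := by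
      intro r
      refine Finset.sum_eq_zero fun k hk => ?_
      have hki : k ≠ i := fun h => hi r (h ▸ hk)
      rw [Pi.single_eq_of_ne hki 1, mul_zero]
    have h := hvar _ hv
    rw [single_dotProduct, one_mul, hSg] at h
    exact (mul_eq_zero.mp h).resolve_left (hS i).ne'
  -- g is constant on each Ω r
  have hconst : ∀ r, ∀ i ∈ Ω r, ∀ j ∈ Ω r, g i = g j := by
    intro r i hi j hj
    set v : Fin N → ℝ :=
      fun k => (if k = i then (S i)⁻¹ else 0) - (if k = j then (S j)⁻¹ else 0) with hvdef
    have hvk : ∀ k, v k = (if k = i then (S i)⁻¹ else 0) - (if k = j then (S j)⁻¹ else 0) :=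
      fun k => rfl
    have hsum : ∀ F : Finset (Fin N), ∑ k ∈ F, S k * v k
        = (if i ∈ F then 1 else 0) - (if j ∈ F then 1 else 0) := by
      intro F
      have : ∀ k, S k * v k = (if k = i then S k * (S i)⁻¹ else 0)
          - (if k = j then S k * (S j)⁻¹ else 0) := by
        intro k
        rw [hvk k]; split_ifs <;> ring
      rw [Finset.sum_congr rfl fun k _ => this k, Finset.sum_sub_distrib,
        Finset.sum_ite_eq' F i (fun k => S k * (S i)⁻¹),
        Finset.sum_ite_eq' F j (fun k => S k * (S j)⁻¹),
        ]
      rw [mul_inv_cancel₀ (hS i).ne', mul_inv_cancel₀ (hS j).ne']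
    have hv : ∀ r', ∑ k ∈ Ω r', S k * v k = 0 := by
      intro r'
      rw [hsum]
      by_cases hrr : r' = r
      · subst hrr; rw [if_pos hi, if_pos hj, sub_self]
      · have hdi : i ∉ Ω r' := Finset.disjoint_left.mp (hdisj r r' (fun h => hrr h.symm)) hi
        have hdj : j ∉ Ω r' := Finset.disjoint_left.mp (hdisj r r' (fun h => hrr h.symm)) hj
        rw [if_neg hdi, if_neg hdj, sub_self]
    have h := hvar v hv
    have hdotv : v ⬝ᵥ (Sd *ᵥ (L ^ p *ᵥ πstar)) = g i - g j := by
      have : ∀ k, v k * (Sd *ᵥ (L ^ p *ᵥ πstar)) k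
          = (if k = i then (S i)⁻¹ * (S k * g k) else 0)
            - (if k = j then (S j)⁻¹ * (S k * g k) else 0) := by
        intro k
        rw [hSg k, hvk k]; split_ifs <;> ring
      rw [dotProduct, Finset.sum_congr rfl fun k _ => this k, Finset.sum_sub_distrib,
        Finset.sum_ite_eq' Finset.univ i, Finset.sum_ite_eq' Finset.univ j,
        if_pos (Finset.mem_univ i), if_pos (Finset.mem_univ j),
        inv_mul_cancel_left₀ (hS i).ne', inv_mul_cancel_left₀ (hS j).ne']
    rw [hdotv] at h
    linarith
  -- the multipliers
  have hEL : (2:ℝ) • g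
      = ∑ r, (2 * g ((hne r).choose)) • (fun k => if k ∈ Ω r then (1:ℝ) else 0) := by
    funext i
    have hRHS : (∑ r, (2 * g ((hne r).choose)) • (fun k => if k ∈ Ω r then (1:ℝ) else 0)) i
        = ∑ r, (2 * g ((hne r).choose)) * (if i ∈ Ω r then (1:ℝ) else 0) := by
      simp [Finset.sum_apply]
    rw [Pi.smul_apply, smul_eq_mul, hRHS]
    by_cases hi : ∃ r, i ∈ Ω r
    · obtain ⟨r0, hr0⟩ := hi
      rw [Finset.sum_eq_single r0]
      · rw [if_pos hr0, mul_one, hconst r0 ((hne r0).choose) (hne r0).choose_spec i hr0]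
      · intro r _ hr
        have : i ∉ Ω r := Finset.disjoint_left.mp (hdisj r0 r (fun h => hr h.symm)) hr0
        rw [if_neg this, mul_zero]
      · intro h; exact absurd (Finset.mem_univ r0) h
    · push_neg at hi
      rw [hout i hi, mul_zero]
      exact (Finset.sum_eq_zero fun r _ => by rw [if_neg (hi r), mul_zero]).symm
  refine ⟨fun r => 2 * g ((hne r).choose), hEL, ?_⟩
  · -- compatibility condition
    have hzero : ∑ i, S i * g i = 0 := by
      obtain ⟨q, hq⟩ : ∃ q, p = q + 1 := ⟨p - 1, (Nat.succ_pred_eq_of_pos hp).symm⟩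
      have hfact : Sd * L ^ p = M * L ^ q := by
        rw [hq, pow_succ', ← Matrix.mul_assoc, hSL]
      have hcol : ∀ k, ∑ i, M i k = 0 := by
        intro k
        have hWc : ∀ i, W i k = W k i := fun i => by
          conv_lhs => rw [← hWsym]
          rfl
        simp only [hMdef, Matrix.sub_apply, Finset.sum_sub_distrib, Matrix.diagonal_apply]
        rw [Finset.sum_ite_eq' Finset.univ k (fun i => ∑ j, W i j)]
        rw [if_pos (Finset.mem_univ k), Finset.sum_congr rfl fun i _ => hWc i, sub_self]
      calc ∑ i, S i * g i = ∑ i, ((Sd * L ^ p) *ᵥ πstar) i := by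
            refine Finset.sum_congr rfl fun i _ => ?_
            rw [← Matrix.mulVec_mulVec]
            exact (hSg i).symm
        _ = ∑ i, (M *ᵥ (L ^ q *ᵥ πstar)) i := by rw [hfact, ← Matrix.mulVec_mulVec]
        _ = ∑ k, (∑ i, M i k) * (L ^ q *ᵥ πstar) k := by
            simp only [Matrix.mulVec, dotProduct]
            rw [Finset.sum_comm]
            exact Finset.sum_congr rfl fun k _ => by rw [Finset.sum_mul]
        _ = 0 := Finset.sum_eq_zero fun k _ => by rw [hcol k, zero_mul]
    have hswap : ∑ i, S i *
        (∑ r, (2 * g ((hne r).choose)) • (fun k => if k ∈ Ω r then (1:ℝ) else 0)) i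
        = ∑ r, (2 * g ((hne r).choose)) * ∑ i ∈ Ω r, S i := by
      simp only [Finset.sum_apply, Pi.smul_apply, smul_eq_mul, Finset.mul_sum]
      rw [Finset.sum_comm]
      refine Finset.sum_congr rfl fun r _ => ?_
      have hterm : ∀ i, S i * ((2 * g ((hne r).choose)) * if i ∈ Ω r then (1:ℝ) else 0)
          = if i ∈ Ω r then (2 * g ((hne r).choose)) * S i else 0 := by
        intro i; split_ifs <;> ring
      rw [Finset.sum_congr rfl fun i _ => hterm i, Finset.sum_ite_mem, Finset.univ_inter,
        ← Finset.mul_sum]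
    calc ∑ r, (2 * g ((hne r).choose)) * ∑ i ∈ Ω r, S i
        = ∑ i, S i *
          (∑ r, (2 * g ((hne r).choose)) • (fun k => if k ∈ Ω r then (1:ℝ) else 0)) i :=
          hswap.symm
      _ = ∑ i, S i * ((2:ℝ) • g) i := by rw [← hEL]
      _ = 2 * ∑ i, S i * g i := by
          rw [Finset.mul_sum]
          exact Finset.sum_congr rfl fun i _ => by
            rw [Pi.smul_apply, smul_eq_mul]; ring
      _ = 0 := by rw [hzero, mul_zero]
end
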